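/- (Theorem 1, architectural robustness of the multi-scale flow.) Let n ≥ 1, k ≥ 0 be natural numbers, and for each i ∈ {1,…,k} let mᵢ, dᵢ ≥ 1 be natural numbers. Let δ ≥ 0, L₁, L₂ ≥ 0, b > 0 be real numbers. Let x, x⋆ ∈ EuclideanSpace ℝ (Fin n) with ‖x − x⋆‖₂ ≤ δ. For each i, let Yᵢ : EuclideanSpace ℝ (Fin n) → EuclideanSpace ℝ (Fin mᵢ) and Zᵢ : EuclideanSpace ℝ (Fin n) → EuclideanSpace ℝ (Fin dᵢ) be 1-Lipschitz maps, and let μᵢ, σᵢ : EuclideanSpace ℝ (Fin mᵢ) → EuclideanSpace ℝ (Fin dᵢ) be L₂-Lipschitz maps satisfying, for u ∈ {x, x⋆} and all components j: |Zᵢ(u)ⱼ| ≤ b, |μᵢ(Yᵢ(u))ⱼ| ≤ b, and σᵢ(Yᵢ(u))ⱼ ≥ 1/b. Let M : EuclideanSpace ℝ (Fin n) → EuclideanSpace ℝ (Fin d) be an L₁-Lipschitz map (the main-flow). Define the negative log-likelihood NLL(u) = ∑_{i=1}^{k} [ −ℓ(Zᵢ(u); μᵢ(Yᵢ(u)), σᵢ(Yᵢ(u)))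 ] + ‖M(u)‖₂²/2 + (d/2)·log(2π). Then NLL(x⋆) − NLL(x) ≤ ∑_{i=1}^{k} δ·√(dᵢ)·( L₂·((2b)²·b³ + 2b·b² + b) + 2b·b² ) + L₁·δ·‖M(x)‖₂ + L₁²·δ²/2. -/

import Mathlib

/-!
Each layer term splits over coordinates into summands `log s + r ^ 2 / 2` with the
standardized residual `r = (z - μ) / s`. Under `|z|, |μ| ≤ b` and `s ≥ 1 / b`, the logarithm is
`b`-Lipschitz, `s ↦ s⁻¹` is `b²`-Lipschitz and `|r| ≤ 2b²`, so a summand moves by at most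
`((2b)²b³ + b)|Δs| + 2b·b²(|Δμ| + |Δz|)`. Summing with `∑ⱼ |vⱼ| ≤ √d ‖v‖` and composing the
Lipschitz bounds of `Y`, `Z`, `μ`, `σ` gives the layer term; the main-flow term comes from
`‖M x⋆‖ ≤ ‖M x‖ + L₁δ`.
-/

/-- The diagonal-Gaussian log-density
`ℓ(z; μ, s) = −(d/2)·log(2π) − ∑ⱼ log sⱼ − ∑ⱼ (zⱼ − μⱼ)²/(2 sⱼ²)`. -/
noncomputable def gaussLogDensity (d : ℕ) (z μ s : Fin d → ℝ) : ℝ :=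
  -((d : ℝ) / 2) * Real.log (2 * Real.pi) - ∑ j, Real.log (s j)
    - ∑ j, (z j - μ j) ^ 2 / (2 * (s j) ^ 2)

theorem sum_abs_le_sqrt_card_mul_norm {ι : Type*} [Fintype ι] (a : EuclideanSpace ℝ ι) :
    ∑ i, |a i| ≤ √(Fintype.card ι) * ‖a‖ := by
  rw [← Real.sqrt_sq (norm_nonneg a), ← Real.sqrt_mul (Nat.cast_nonneg _),
    Real.le_sqrt (by positivity) (by positivity), EuclideanSpace.real_norm_sq_eq]
  simpa only [sq_abs, Finset.card_univ] using
    sq_sum_le_card_mul_sum_sq (s := Finset.univ) (f := fun i => |a i|)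

theorem abs_sq_sub_sq_le {a a' c : ℝ} (ha : |a| ≤ c) (ha' : |a'| ≤ c) :
    |a' ^ 2 - a ^ 2| ≤ 2 * c * |a' - a| := by
  rw [sq_sub_sq, abs_mul]
  have : |a' + a| ≤ 2 * c := (abs_add_le _ _).trans (by linarith)
  exact mul_le_mul_of_nonneg_right this (abs_nonneg _)

theorem abs_mul_sub_mul_le {a a' u u' A B : ℝ} (ha' : |a'| ≤ A) (hu : |u| ≤ B) :
    |a' * u' - a * u| ≤ A * |u' - u| + B * |a' - a| := by
  calc |a' * u' - a * u| = |a' * (u' - u) + (a' - a) * u| := by ring_nf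
    _ ≤ |a'| * |u' - u| + |a' - a| * |u| := by
      rw [← abs_mul, ← abs_mul]; exact abs_add_le _ _
    _ ≤ A * |u' - u| + B * |a' - a| := by
      rw [mul_comm _ |u|]; gcongr

theorem abs_inv_sub_inv_le {s s' b : ℝ} (hs : 0 < s) (hs' : 0 < s') (hsb : s⁻¹ ≤ b)
    (hs'b : s'⁻¹ ≤ b) : |s'⁻¹ - s⁻¹| ≤ b ^ 2 * |s' - s| := by
  rw [inv_sub_inv' hs'.ne' hs.ne', abs_mul, abs_mul, abs_inv, abs_inv, abs_of_pos hs,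
    abs_of_pos hs', abs_sub_comm]
  have hb : 0 ≤ b := (inv_pos.2 hs).le.trans hsb
  calc s'⁻¹ * |s' - s| * s⁻¹ = s'⁻¹ * s⁻¹ * |s' - s| := by ring
    _ ≤ b * b * |s' - s| := by gcongr
    _ = b ^ 2 * |s' - s| := by ring

theorem log_sub_log_le {s s' b : ℝ} (hs : 0 < s) (hs' : 0 < s') (hsb : s⁻¹ ≤ b) :
    Real.log s' - Real.log s ≤ b * |s' - s| := by
  calc Real.log s' - Real.log s = Real.log (s' / s) := (Real.log_div hs'.ne' hs.ne').symm
    _ ≤ s' / s - 1 := Real.log_le_sub_one_of_pos (div_pos hs' hs)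
    _ = s⁻¹ * (s' - s) := by field_simp
    _ ≤ s⁻¹ * |s' - s| := by gcongr; exact le_abs_self _
    _ ≤ b * |s' - s| := by gcongr

theorem half_sq_norm_sub_half_sq_norm_le {E : Type*} [SeminormedAddGroup E] {a a' : E} {r : ℝ}
    (h : ‖a' - a‖ ≤ r) : ‖a'‖ ^ 2 / 2 - ‖a‖ ^ 2 / 2 ≤ r * ‖a‖ + r ^ 2 / 2 := by
  have hr : 0 ≤ r := (norm_nonneg _).trans h
  have : ‖a'‖ ≤ ‖a‖ + r := (norm_le_norm_add_norm_sub' a' a).trans (add_le_add_right h _)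
  nlinarith [norm_nonneg a']

noncomputable def gaussNegLogDensityCoord (z μ s : ℝ) : ℝ :=
  Real.log s + ((z - μ) / s) ^ 2 / 2

theorem neg_gaussLogDensity_eq (d : ℕ) (z μ s : Fin d → ℝ) :
    -gaussLogDensity d z μ s =
      (d : ℝ) / 2 * Real.log (2 * Real.pi) + ∑ j, gaussNegLogDensityCoord (z j) (μ j) (s j) := by
  have hcoord : ∀ j, gaussNegLogDensityCoord (z j) (μ j) (s j) =
      Real.log (s j) + (z j - μ j) ^ 2 / (2 * s j ^ 2) := fun j => by
    unfold gaussNegLogDensityCoord; ring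
  simp only [hcoord, gaussLogDensity, Finset.sum_add_distrib]
  ring

theorem gaussNegLogDensityCoord_sub_le {b z z' μ μ' s s' : ℝ} (hb : 0 < b)
    (hz : |z| ≤ b) (hz' : |z'| ≤ b) (hμ : |μ| ≤ b) (hμ' : |μ'| ≤ b)
    (hs : 1 / b ≤ s) (hs' : 1 / b ≤ s') :
    gaussNegLogDensityCoord z' μ' s' - gaussNegLogDensityCoord z μ s ≤
      ((2 * b) ^ 2 * b ^ 3 + b) * |s' - s| + 2 * b * b ^ 2 * (|μ' - μ| + |z' - z|) := by
  have hs₀ : 0 < s := (one_div_pos.2 hb).trans_le hs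
  have hs₀' : 0 < s' := (one_div_pos.2 hb).trans_le hs'
  have hsb : s⁻¹ ≤ b := by rw [← one_div]; exact (one_div_le hb hs₀).1 hs
  have hsb' : s'⁻¹ ≤ b := by rw [← one_div]; exact (one_div_le hb hs₀').1 hs'
  have hw : |z - μ| ≤ 2 * b := (abs_sub _ _).trans (by linarith)
  have hw' : |z' - μ'| ≤ 2 * b := (abs_sub _ _).trans (by linarith)
  have hw_sub : |(z' - μ') - (z - μ)| ≤ |z' - z| + |μ' - μ| :=
    (abs_sub _ _).trans_eq' (by ring_nf)
  have hres : ∀ {w s : ℝ}, |w| ≤ 2 * b → 0 < s → s⁻¹ ≤ b → |w / s| ≤ 2 * b * b :=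
    fun hwb hspos hsinv => by
      rw [div_eq_mul_inv, abs_mul, abs_of_pos (inv_pos.2 hspos)]
      gcongr
  have hres_sub : |(z' - μ') / s' - (z - μ) / s| ≤
      2 * b * (b ^ 2 * |s' - s|) + b * (|z' - z| + |μ' - μ|) := by
    simp only [div_eq_mul_inv]
    refine (abs_mul_sub_mul_le hw' ((abs_of_pos (inv_pos.2 hs₀)).trans_le hsb)).trans ?_
    gcongr
    exact abs_inv_sub_inv_le hs₀ hs₀' hsb hsb'
  have hquad : ((z' - μ') / s') ^ 2 / 2 - ((z - μ) / s) ^ 2 / 2 ≤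
      (2 * b) ^ 2 * b ^ 3 * |s' - s| + 2 * b * b ^ 2 * (|μ' - μ| + |z' - z|) :=
    calc ((z' - μ') / s') ^ 2 / 2 - ((z - μ) / s) ^ 2 / 2
        ≤ |((z' - μ') / s') ^ 2 - ((z - μ) / s) ^ 2| / 2 := by
          linarith [le_abs_self (((z' - μ') / s') ^ 2 - ((z - μ) / s) ^ 2)]
      _ ≤ 2 * (2 * b * b) * |(z' - μ') / s' - (z - μ) / s| / 2 := by
          gcongr; exact abs_sq_sub_sq_le (hres hw hs₀ hsb) (hres hw' hs₀' hsb')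
      _ ≤ 2 * (2 * b * b) * (2 * b * (b ^ 2 * |s' - s|) + b * (|z' - z| + |μ' - μ|)) / 2 := by
          gcongr
      _ = _ := by ring
  have hlog := log_sub_log_le hs₀ hs₀' hsb
  unfold gaussNegLogDensityCoord
  linarith

theorem neg_gaussLogDensity_sub_le {e : ℕ} {b : ℝ} (hb : 0 < b)
    {z z' μ μ' s s' : EuclideanSpace ℝ (Fin e)}
    (hz : ∀ j, |z j| ≤ b) (hz' : ∀ j, |z' j| ≤ b) (hμ : ∀ j, |μ j| ≤ b) (hμ' : ∀ j, |μ' j| ≤ b)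
    (hs : ∀ j, 1 / b ≤ s j) (hs' : ∀ j, 1 / b ≤ s' j) :
    -gaussLogDensity e z' μ' s' - -gaussLogDensity e z μ s ≤
      √e * (((2 * b) ^ 2 * b ^ 3 + b) * ‖s' - s‖ + 2 * b * b ^ 2 * (‖μ' - μ‖ + ‖z' - z‖)) := by
  set C₁ := (2 * b) ^ 2 * b ^ 3 + b
  set C₂ := 2 * b * b ^ 2
  have hsum (v : EuclideanSpace ℝ (Fin e)) : ∑ j, |v j| ≤ √e * ‖v‖ := by
    simpa only [Fintype.card_fin] using sum_abs_le_sqrt_card_mul_norm v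
  rw [neg_gaussLogDensity_eq, neg_gaussLogDensity_eq, add_sub_add_left_eq_sub,
    ← Finset.sum_sub_distrib]
  calc ∑ j, (gaussNegLogDensityCoord (z' j) (μ' j) (s' j)
        - gaussNegLogDensityCoord (z j) (μ j) (s j))
      ≤ ∑ j, (C₁ * |s' j - s j| + C₂ * (|μ' j - μ j| + |z' j - z j|)) :=
        Finset.sum_le_sum fun j _ => gaussNegLogDensityCoord_sub_le hb
          (hz j) (hz' j) (hμ j) (hμ' j) (hs j) (hs' j)
    _ = C₁ * ∑ j, |(s' - s) j| + C₂ * (∑ j, |(μ' - μ) j| + ∑ j, |(z' - z) j|) := by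
        simp only [PiLp.sub_apply, Finset.sum_add_distrib, Finset.mul_sum, mul_add]
    _ ≤ C₁ * (√e * ‖s' - s‖) + C₂ * (√e * ‖μ' - μ‖ + √e * ‖z' - z‖) := by
        gcongr <;> apply hsum
    _ = √e * (C₁ * ‖s' - s‖ + C₂ * (‖μ' - μ‖ + ‖z' - z‖)) := by ring

theorem multi_scale_flow_robustness_general
    (n k d : ℕ)
    (m dim : Fin k → ℕ)
    (δ L₁ L₂ b : ℝ) (hL₁ : 0 ≤ L₁) (hL₂ : 0 ≤ L₂) (hb : 0 < b)
    (x xstar : EuclideanSpace ℝ (Fin n)) (hx : ‖x - xstar‖ ≤ δ)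
    (Y : ∀ i : Fin k, EuclideanSpace ℝ (Fin n) → EuclideanSpace ℝ (Fin (m i)))
    (Z : ∀ i : Fin k, EuclideanSpace ℝ (Fin n) → EuclideanSpace ℝ (Fin (dim i)))
    (hY : ∀ i, ∀ u v : EuclideanSpace ℝ (Fin n), ‖Y i u - Y i v‖ ≤ ‖u - v‖)
    (hZ : ∀ i, ∀ u v : EuclideanSpace ℝ (Fin n), ‖Z i u - Z i v‖ ≤ ‖u - v‖)
    (μ σ : ∀ i : Fin k, EuclideanSpace ℝ (Fin (m i)) → EuclideanSpace ℝ (Fin (dim i)))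
    (hμlip : ∀ i, ∀ u v : EuclideanSpace ℝ (Fin (m i)), ‖μ i u - μ i v‖ ≤ L₂ * ‖u - v‖)
    (hσlip : ∀ i, ∀ u v : EuclideanSpace ℝ (Fin (m i)), ‖σ i u - σ i v‖ ≤ L₂ * ‖u - v‖)
    (hZb : ∀ i j, |Z i x j| ≤ b ∧ |Z i xstar j| ≤ b)
    (hμb : ∀ i j, |μ i (Y i x) j| ≤ b ∧ |μ i (Y i xstar) j| ≤ b)
    (hσb : ∀ i j, 1 / b ≤ σ i (Y i x) j ∧ 1 / b ≤ σ i (Y i xstar) j)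
    (M : EuclideanSpace ℝ (Fin n) → EuclideanSpace ℝ (Fin d))
    (hM : ∀ u v : EuclideanSpace ℝ (Fin n), ‖M u - M v‖ ≤ L₁ * ‖u - v‖)
    (NLL : EuclideanSpace ℝ (Fin n) → ℝ)
    (hNLL : ∀ u, NLL u =
      (∑ i : Fin k, -gaussLogDensity (dim i) (Z i u) (μ i (Y i u)) (σ i (Y i u)))
        + ‖M u‖ ^ 2 / 2 + (d : ℝ) / 2 * Real.log (2 * Real.pi)) :
    NLL xstar - NLL x ≤
      (∑ i : Fin k, δ * Real.sqrt (dim i) *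
          (L₂ * ((2 * b) ^ 2 * b ^ 3 + 2 * b * b ^ 2 + b) + 2 * b * b ^ 2))
        + L₁ * δ * ‖M x‖ + L₁ ^ 2 * δ ^ 2 / 2 := by
  have hx' : ‖xstar - x‖ ≤ δ := norm_sub_rev x xstar ▸ hx
  have hlayer : ∀ i,
      -gaussLogDensity (dim i) (Z i xstar) (μ i (Y i xstar)) (σ i (Y i xstar))
        - -gaussLogDensity (dim i) (Z i x) (μ i (Y i x)) (σ i (Y i x)) ≤
      δ * √(dim i) * (L₂ * ((2 * b) ^ 2 * b ^ 3 + 2 * b * b ^ 2 + b) + 2 * b * b ^ 2) := by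
    intro i
    have hYδ : ‖Y i xstar - Y i x‖ ≤ δ := (hY i _ _).trans hx'
    calc _ ≤ √(dim i) * (((2 * b) ^ 2 * b ^ 3 + b) * ‖σ i (Y i xstar) - σ i (Y i x)‖
            + 2 * b * b ^ 2 * (‖μ i (Y i xstar) - μ i (Y i x)‖ + ‖Z i xstar - Z i x‖)) :=
          neg_gaussLogDensity_sub_le hb (hZb i · |>.1) (hZb i · |>.2) (hμb i · |>.1)
            (hμb i · |>.2) (hσb i · |>.1) (hσb i · |>.2)
      _ ≤ √(dim i) * (((2 * b) ^ 2 * b ^ 3 + b) * (L₂ * δ)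
            + 2 * b * b ^ 2 * (L₂ * δ + δ)) := by
          gcongr
          · exact (hσlip i _ _).trans (by gcongr)
          · exact (hμlip i _ _).trans (by gcongr)
          · exact (hZ i _ _).trans hx'
      _ = _ := by ring
  have hflow : ‖M xstar‖ ^ 2 / 2 - ‖M x‖ ^ 2 / 2 ≤ L₁ * δ * ‖M x‖ + (L₁ * δ) ^ 2 / 2 :=
    half_sq_norm_sub_half_sq_norm_le ((hM _ _).trans (by gcongr))
  have hlayers := Finset.sum_le_sum fun i (_ : i ∈ Finset.univ) => hlayer i
  rw [Finset.sum_sub_distrib] at hlayers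
  rw [hNLL, hNLL]
  linarith [mul_pow L₁ δ 2]

/-- **Theorem 1, architectural robustness of the multi-scale flow.**
The negative log-likelihood
`NLL(u) = ∑ᵢ −ℓ(Zᵢ(u); μᵢ(Yᵢ(u)), σᵢ(Yᵢ(u))) + ‖M(u)‖²/2 + (d/2)·log(2π)`
of a multi-scale flow with `k` factor-out layers (conditioning maps `Yᵢ` and latent maps
`Zᵢ` both `1`-Lipschitz, parameter networks `μᵢ, σᵢ` `L₂`-Lipschitz, main-flow `M`
`L₁`-Lipschitz) increases under a perturbation `‖x − x⋆‖₂ ≤ δ` by at most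
`∑ᵢ δ·√dᵢ·(L₂·((2b)²b³ + 2b·b² + b) + 2b·b²) + L₁·δ·‖M(x)‖₂ + L₁²·δ²/2`. -/
theorem multi_scale_flow_robustness
    (n k d : ℕ) (hn : 1 ≤ n)
    (m dim : Fin k → ℕ) (hm : ∀ i, 1 ≤ m i) (hdim : ∀ i, 1 ≤ dim i)
    (δ L₁ L₂ b : ℝ) (hδ : 0 ≤ δ) (hL₁ : 0 ≤ L₁) (hL₂ : 0 ≤ L₂) (hb : 0 < b)
    (x xstar : EuclideanSpace ℝ (Fin n)) (hx : ‖x - xstar‖ ≤ δ)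
    (Y : ∀ i : Fin k, EuclideanSpace ℝ (Fin n) → EuclideanSpace ℝ (Fin (m i)))
    (Z : ∀ i : Fin k, EuclideanSpace ℝ (Fin n) → EuclideanSpace ℝ (Fin (dim i)))
    (hY : ∀ i, ∀ u v : EuclideanSpace ℝ (Fin n), ‖Y i u - Y i v‖ ≤ ‖u - v‖)
    (hZ : ∀ i, ∀ u v : EuclideanSpace ℝ (Fin n), ‖Z i u - Z i v‖ ≤ ‖u - v‖)
    (μ σ : ∀ i : Fin k, EuclideanSpace ℝ (Fin (m i)) → EuclideanSpace ℝ (Fin (dim i)))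
    (hμlip : ∀ i, ∀ u v : EuclideanSpace ℝ (Fin (m i)), ‖μ i u - μ i v‖ ≤ L₂ * ‖u - v‖)
    (hσlip : ∀ i, ∀ u v : EuclideanSpace ℝ (Fin (m i)), ‖σ i u - σ i v‖ ≤ L₂ * ‖u - v‖)
    (hZb : ∀ i j, |Z i x j| ≤ b ∧ |Z i xstar j| ≤ b)
    (hμb : ∀ i j, |μ i (Y i x) j| ≤ b ∧ |μ i (Y i xstar) j| ≤ b)
    (hσb : ∀ i j, 1 / b ≤ σ i (Y i x) j ∧ 1 / b ≤ σ i (Y i xstar) j)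
    (M : EuclideanSpace ℝ (Fin n) → EuclideanSpace ℝ (Fin d))
    (hM : ∀ u v : EuclideanSpace ℝ (Fin n), ‖M u - M v‖ ≤ L₁ * ‖u - v‖)
    (NLL : EuclideanSpace ℝ (Fin n) → ℝ)
    (hNLL : ∀ u, NLL u =
      (∑ i : Fin k, -gaussLogDensity (dim i) (Z i u) (μ i (Y i u)) (σ i (Y i u)))
        + ‖M u‖ ^ 2 / 2 + (d : ℝ) / 2 * Real.log (2 * Real.pi)) :
    NLL xstar - NLL x ≤
      (∑ i : Fin k, δ * Real.sqrt (dim i) *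
          (L₂ * ((2 * b) ^ 2 * b ^ 3 + 2 * b * b ^ 2 + b) + 2 * b * b ^ 2))
        + L₁ * δ * ‖M x‖ + L₁ ^ 2 * δ ^ 2 / 2 :=
  multi_scale_flow_robustness_general n k d m dim δ L₁ L₂ b hL₁ hL₂ hb x xstar hx Y Z hY hZ μ σ
    hμlip hσlip hZb hμb hσb M hM NLL hNLL
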